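/- Let k be a field of characteristic zero, let a, b, m ≥ 1 with gcd(a, b) = 1, let c, d ≥ 0, and let F ∈ k[[x,y]] be a nonzero power series such that x does not divide F, y does not divide F, and x^c y^d F has no nonzero monomial that is a power of x^a y^b. Set r = ord(F), and let F₁(x, y) = F(x, xy)/x^r ∈ k[[x,y]] (the series F(x, xy) is divisible by x^r). Then: (1) ord(F₁) ≤ r; and (2) x^{c+d+r} y^d F₁ has no nonzero monomial that is a power of x^{a+b} y^b. Consequently, for u = (x^a y^b)^m and v = P(x^a y^b) + x^c y^d F, the quadratic substitution x ↦ x, y ↦ xy sends u to (x^{a+b} y^b)^m and v to P(x^{a+b} y^b) + x^{c+d+r} y^d F₁. -/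

import Mathlib

/-!
The substitution `y ↦ x y` sends `x^i y^j` to `x^(i+j) y^j`, so the coefficient of `x^p y^q`
in `φ G` is that of `x^(p-q) y^q` in `G` if `q ≤ p` and zero otherwise; coefficientwise
continuity reduces this to polynomials, where `φ` is determined by the images of `x` and `y`.
Hence the monomials of `F` of degree `< r` land in `x`-degree `< r`, so `x^r ∣ φ F`; a monomial
`x^(r-j) y^j` of `F` of degree `r` becomes the monomial `y^j` of `F₁`, so `ord F₁ ≤ r`; and the
normalization survives because `φ (x^c y^d F) = x^(c+d+r) y^d F₁` while the monomials sent to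
powers of `x^(a+b) y^b` are exactly the powers of `x^a y^b`.
-/

noncomputable section

/-- The order (minimal total degree of a monomial with nonzero coefficient) of a
two-variable formal power series, as an extended natural number. -/
def ordm {k : Type*} [Field k] (F : MvPowerSeries (Fin 2) k) : ℕ∞ :=
  sInf {n : ℕ∞ | ∃ d : Fin 2 →₀ ℕ, MvPowerSeries.coeff d F ≠ 0 ∧ n = ((d 0 + d 1 : ℕ) : ℕ∞)}

/-- Coefficientwise continuity of a `k`-algebra endomorphism of `k[[x,y]]`. -/
def CoeffCont {k : Type*} [Field k]
    (φ : MvPowerSeries (Fin 2) k →ₐ[k] MvPowerSeries (Fin 2) k) : Prop :=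
  ∀ (d : Fin 2 →₀ ℕ) (F G : MvPowerSeries (Fin 2) k),
    (∀ e : Fin 2 →₀ ℕ, e 0 + e 1 ≤ d 0 + d 1 →
      MvPowerSeries.coeff e F = MvPowerSeries.coeff e G) →
    MvPowerSeries.coeff d (φ F) = MvPowerSeries.coeff d (φ G)

open Classical in
/-- The power series `p(x^a y^b)` obtained by substituting the monomial `x^a y^b` into a
one-variable power series `p`. -/
def pevm {k : Type*} [Field k] (a b : ℕ) (p : PowerSeries k) : MvPowerSeries (Fin 2) k :=
  fun d => if h : ∃ t : ℕ, d 0 = t * a ∧ d 1 = t * b then PowerSeries.coeff h.choose p else 0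

open Finsupp

namespace Finsupp

variable {M : Type*}

lemma eq_single_zero_add_single_one [AddZeroClass M] (e : Fin 2 →₀ M) :
    e = single 0 (e 0) + single 1 (e 1) := by
  ext i
  fin_cases i <;> simp

lemma single_add_single_apply_zero [AddZeroClass M] (i j : M) :
    (single 0 i + single 1 j : Fin 2 →₀ M) 0 = i := by
  simp

lemma single_add_single_apply_one [AddZeroClass M] (i j : M) :
    (single 0 i + single 1 j : Fin 2 →₀ M) 1 = j := by
  simp

lemma eq_single_add_single_iff [AddZeroClass M] {e : Fin 2 →₀ M} {i j : M} :
    e = single 0 i + single 1 j ↔ e 0 = i ∧ e 1 = j := by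
  constructor
  · rintro rfl
    simp
  · rintro ⟨rfl, rfl⟩
    exact eq_single_zero_add_single_one e

lemma degree_fin_two [AddCommMonoid M] (e : Fin 2 →₀ M) : degree e = e 0 + e 1 := by
  rw [degree_eq_sum, Fin.sum_univ_two]

end Finsupp

namespace MvPowerSeries

variable {k : Type*} [Field k]

lemma ordm_eq_order (F : MvPowerSeries (Fin 2) k) : ordm F = F.order := by
  refine le_antisymm ?_ (le_sInf ?_)
  · rcases eq_or_ne F 0 with rfl | hF
    · simp
    obtain ⟨e, he, he_deg⟩ := exists_coeff_ne_zero_and_order (ne_zero_iff_order_finite.mp hF)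
    exact sInf_le ⟨e, he, by rw [← he_deg, degree_fin_two]⟩
  · rintro _ ⟨e, he, rfl⟩
    simpa [degree_fin_two] using order_le he

lemma monomial_single_add_single {R : Type*} [CommSemiring R] (i j : ℕ) (c : R) :
    (monomial (single 0 i + single 1 j) c : MvPowerSeries (Fin 2) R) =
      C c * X 0 ^ i * X 1 ^ j := by
  rw [X_pow_eq, X_pow_eq, ← monomial_zero_eq_C_apply, monomial_mul_monomial,
    monomial_mul_monomial, zero_add, mul_one, mul_one]

lemma coeff_single_add_X_pow_mul {σ R : Type*} [Semiring R] (s : σ) (r : ℕ)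
    (f : σ →₀ ℕ) (H : MvPowerSeries σ R) :
    coeff (single s r + f) (X s ^ r * H) = coeff f H := by
  rw [X_pow_eq, coeff_add_monomial_mul, one_mul]

lemma coeff_pevm {a b : ℕ} (hb : 0 < b) (p : PowerSeries k) (t : ℕ) :
    coeff (single 0 (t * a) + single 1 (t * b)) (pevm a b p) = PowerSeries.coeff t p := by
  have h : ∃ s : ℕ, t * a = s * a ∧ t * b = s * b := ⟨t, rfl, rfl⟩
  rw [coeff_apply, pevm, single_add_single_apply_zero, single_add_single_apply_one, dif_pos h,
    ← Nat.eq_of_mul_eq_mul_right hb h.choose_spec.2]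

lemma coeff_pevm_eq_zero {a b : ℕ} (p : PowerSeries k) {e : Fin 2 →₀ ℕ}
    (h : ¬ ∃ t : ℕ, e 0 = t * a ∧ e 1 = t * b) : coeff e (pevm a b p) = 0 := by
  rw [coeff_apply, pevm, dif_neg h]

structure IsQuadraticTransform
    (φ : MvPowerSeries (Fin 2) k →ₐ[k] MvPowerSeries (Fin 2) k) : Prop where
  coeffCont : CoeffCont φ
  map_X_zero : φ (X 0) = X 0
  map_X_one : φ (X 1) = X 0 * X 1

namespace IsQuadraticTransform

variable {φ : MvPowerSeries (Fin 2) k →ₐ[k] MvPowerSeries (Fin 2) k}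

lemma map_monomial (hφ : IsQuadraticTransform φ) (i j : ℕ) (c : k) :
    φ (monomial (single 0 i + single 1 j) c) = monomial (single 0 (i + j) + single 1 j) c := by
  have hC : φ (C c) = C c := by simpa [algebraMap_apply] using φ.commutes c
  rw [monomial_single_add_single, monomial_single_add_single, map_mul, map_mul, map_pow,
    map_pow, hC, hφ.map_X_zero, hφ.map_X_one]
  ring

lemma coeff_map_coe (hφ : IsQuadraticTransform φ) (p : MvPolynomial (Fin 2) k)
    (e : Fin 2 →₀ ℕ) :
    coeff e (φ p) = if e 1 ≤ e 0 then
      coeff (single 0 (e 0 - e 1) + single 1 (e 1)) (p : MvPowerSeries (Fin 2) k) else 0 := by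
  induction p using MvPolynomial.induction_on' with
  | monomial f c =>
    rw [MvPolynomial.coe_monomial, eq_single_zero_add_single_one f, hφ.map_monomial,
      coeff_monomial, coeff_monomial]
    simp only [eq_single_add_single_iff, single_add_single_apply_zero,
      single_add_single_apply_one]
    split_ifs <;> first | rfl | omega
  | add p q hp hq =>
    simp only [MvPolynomial.coe_add, map_add, hp, hq]
    split_ifs <;> simp

lemma coeff_map (hφ : IsQuadraticTransform φ) (G : MvPowerSeries (Fin 2) k)
    (e : Fin 2 →₀ ℕ) :
    coeff e (φ G) =
      if e 1 ≤ e 0 then coeff (single 0 (e 0 - e 1) + single 1 (e 1)) G else 0 := by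
  set p : MvPolynomial (Fin 2) k := truncTotal (e 0 + e 1 + 1) G
  have hp {f : Fin 2 →₀ ℕ} (hf : f 0 + f 1 ≤ e 0 + e 1) :
      coeff f (p : MvPowerSeries (Fin 2) k) = coeff f G := by
    rw [MvPolynomial.coeff_coe]
    exact coeff_truncTotal G (by rw [degree_fin_two]; omega)
  rw [hφ.coeffCont e G p fun f hf => (hp hf).symm, hφ.coeff_map_coe]
  split_ifs
  · exact hp (by simp)
  · rfl

lemma map_pevm (hφ : IsQuadraticTransform φ) {a b : ℕ} (hb : 0 < b) (p : PowerSeries k) :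
    φ (pevm a b p) = pevm (a + b) b p := by
  ext e
  rw [hφ.coeff_map]
  by_cases he : ∃ t : ℕ, e 0 = t * (a + b) ∧ e 1 = t * b
  · obtain ⟨t, he0, he1⟩ := he
    rw [eq_single_add_single_iff.2 ⟨he0, he1⟩, single_add_single_apply_zero,
      single_add_single_apply_one, if_pos (by gcongr; omega),
      show t * (a + b) - t * b = t * a by rw [Nat.mul_add, Nat.add_sub_cancel], coeff_pevm hb,
      coeff_pevm hb]
  · rw [coeff_pevm_eq_zero p he]
    split_ifs with hle
    · refine coeff_pevm_eq_zero p ?_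
      rintro ⟨t, ht0, ht1⟩
      simp only [single_add_single_apply_zero, single_add_single_apply_one] at ht0 ht1
      exact he ⟨t, by rw [Nat.mul_add]; omega, ht1⟩
    · rfl

lemma X_pow_dvd_map (hφ : IsQuadraticTransform φ) {F : MvPowerSeries (Fin 2) k} {r : ℕ}
    (hr : ordm F = r) : X 0 ^ r ∣ φ F := by
  rw [ordm_eq_order, order_eq_nat] at hr
  refine X_pow_dvd_iff.2 fun e he => ?_
  rw [hφ.coeff_map]
  split_ifs with hle
  · exact hr.2 _ (by rw [degree_fin_two]; simp; omega)
  · rfl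

lemma coeff_of_map_eq_X_pow_mul (hφ : IsQuadraticTransform φ)
    {F F₁ : MvPowerSeries (Fin 2) k} {r : ℕ} (h : φ F = X 0 ^ r * F₁) (i j : ℕ) :
    coeff (single 0 i + single 1 j) F₁ =
      if j ≤ r + i then coeff (single 0 (r + i - j) + single 1 j) F else 0 := by
  rw [← coeff_single_add_X_pow_mul 0 r, ← h, hφ.coeff_map, ← add_assoc, ← single_add]
  simp

lemma ordm_le_of_map_eq_X_pow_mul (hφ : IsQuadraticTransform φ)
    {F F₁ : MvPowerSeries (Fin 2) k} {r : ℕ} (hr : ordm F = r) (h : φ F = X 0 ^ r * F₁) :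
    ordm F₁ ≤ r := by
  rw [ordm_eq_order, order_eq_nat] at hr
  obtain ⟨e, he, he_deg⟩ := hr.1
  rw [degree_fin_two] at he_deg
  have hF₁ : coeff (single 0 0 + single 1 (e 1)) F₁ ≠ 0 := by
    rwa [hφ.coeff_of_map_eq_X_pow_mul h, if_pos (by omega), show r + 0 - e 1 = e 0 by omega,
      ← eq_single_zero_add_single_one]
  rw [ordm_eq_order]
  exact (order_le hF₁).trans (by simp; omega)

lemma coeff_eq_zero_of_map_eq_X_pow_mul (hφ : IsQuadraticTransform φ)
    {F F₁ : MvPowerSeries (Fin 2) k} {a b c d r : ℕ}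
    (hnorm : ∀ i j : ℕ, (∃ t : ℕ, c + i = t * a ∧ d + j = t * b) →
      coeff (single 0 i + single 1 j) F = 0)
    (h : φ F = X 0 ^ r * F₁) {i j : ℕ}
    (hij : ∃ t : ℕ, c + d + r + i = t * (a + b) ∧ d + j = t * b) :
    coeff (single 0 i + single 1 j) F₁ = 0 := by
  obtain ⟨t, ht0, ht1⟩ := hij
  rw [hφ.coeff_of_map_eq_X_pow_mul h]
  split_ifs with hle
  · exact hnorm _ _ ⟨t, by rw [Nat.mul_add] at ht0; omega, ht1⟩
  · rfl

end IsQuadraticTransform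

end MvPowerSeries

theorem quadSubst_of_normalized_two_point_form_general
    (k : Type*) [Field k]
    (a b m c d : ℕ) (hb : 1 ≤ b)
    (F : MvPowerSeries (Fin 2) k)
    (hnorm : ∀ i j : ℕ, (∃ t : ℕ, c + i = t * a ∧ d + j = t * b) →
      MvPowerSeries.coeff (Finsupp.single 0 i + Finsupp.single 1 j) F = 0)
    (r : ℕ) (hr : ordm F = (r : ℕ∞))
    (P : PowerSeries k)
    (φ : MvPowerSeries (Fin 2) k →ₐ[k] MvPowerSeries (Fin 2) k)
    (hφc : CoeffCont φ)
    (hφ0 : φ (MvPowerSeries.X 0) = MvPowerSeries.X 0)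
    (hφ1 : φ (MvPowerSeries.X 1) = MvPowerSeries.X 0 * MvPowerSeries.X 1) :
    (∃ F₁ : MvPowerSeries (Fin 2) k, φ F = MvPowerSeries.X 0 ^ r * F₁) ∧
    ∀ F₁ : MvPowerSeries (Fin 2) k, φ F = MvPowerSeries.X 0 ^ r * F₁ →
      ordm F₁ ≤ (r : ℕ∞) ∧
      (∀ i j : ℕ, (∃ t : ℕ, (c + d + r) + i = t * (a + b) ∧ d + j = t * b) →
        MvPowerSeries.coeff (Finsupp.single 0 i + Finsupp.single 1 j) F₁ = 0) ∧
      φ ((MvPowerSeries.X 0 ^ a * MvPowerSeries.X 1 ^ b) ^ m) =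
        (MvPowerSeries.X 0 ^ (a + b) * MvPowerSeries.X 1 ^ b) ^ m ∧
      φ (pevm a b P + MvPowerSeries.X 0 ^ c * MvPowerSeries.X 1 ^ d * F) =
        pevm (a + b) b P +
          MvPowerSeries.X 0 ^ (c + d + r) * MvPowerSeries.X 1 ^ d * F₁ := by
  have hφ : MvPowerSeries.IsQuadraticTransform φ := ⟨hφc, hφ0, hφ1⟩
  refine ⟨hφ.X_pow_dvd_map hr, fun F₁ hF₁ => ⟨hφ.ordm_le_of_map_eq_X_pow_mul hr hF₁,
    fun i j => hφ.coeff_eq_zero_of_map_eq_X_pow_mul hnorm hF₁, ?_, ?_⟩⟩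
  · simp only [map_pow, map_mul, hφ0, hφ1]
    ring
  · rw [map_add, hφ.map_pevm hb, map_mul, map_mul, map_pow, map_pow, hφ0, hφ1, hF₁]
    ring

/-- behaviour of a normalized presentation
`u = (x^a y^b)^m`, `v = P(x^a y^b) + x^c y^d F` under the quadratic substitution
`x ↦ x, y ↦ xy`: with `r = ord F`, `F(x, xy)` is divisible by `x^r`, and writing
`F(x, xy) = x^r F₁` one has `ord F₁ ≤ r`, the product `x^{c+d+r} y^d F₁` has no nonzero
monomial which is a power of `x^{a+b} y^b`, and the substitution sends `u` to
`(x^{a+b} y^b)^m` and `v` to `P(x^{a+b} y^b) + x^{c+d+r} y^d F₁`. -/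
theorem quadSubst_of_normalized_two_point_form
    (k : Type*) [Field k] [CharZero k]
    (a b m c d : ℕ) (ha : 1 ≤ a) (hb : 1 ≤ b) (hm : 1 ≤ m) (hab : Nat.gcd a b = 1)
    (F : MvPowerSeries (Fin 2) k) (hF : F ≠ 0)
    (hx : ¬ MvPowerSeries.X 0 ∣ F) (hy : ¬ MvPowerSeries.X 1 ∣ F)
    (hnorm : ∀ i j : ℕ, (∃ t : ℕ, c + i = t * a ∧ d + j = t * b) →
      MvPowerSeries.coeff (Finsupp.single 0 i + Finsupp.single 1 j) F = 0)
    (r : ℕ) (hr : ordm F = (r : ℕ∞))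
    (P : PowerSeries k)
    (φ : MvPowerSeries (Fin 2) k →ₐ[k] MvPowerSeries (Fin 2) k)
    (hφc : CoeffCont φ)
    (hφ0 : φ (MvPowerSeries.X 0) = MvPowerSeries.X 0)
    (hφ1 : φ (MvPowerSeries.X 1) = MvPowerSeries.X 0 * MvPowerSeries.X 1) :
    (∃ F₁ : MvPowerSeries (Fin 2) k, φ F = MvPowerSeries.X 0 ^ r * F₁) ∧
    ∀ F₁ : MvPowerSeries (Fin 2) k, φ F = MvPowerSeries.X 0 ^ r * F₁ →
      ordm F₁ ≤ (r : ℕ∞) ∧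
      (∀ i j : ℕ, (∃ t : ℕ, (c + d + r) + i = t * (a + b) ∧ d + j = t * b) →
        MvPowerSeries.coeff (Finsupp.single 0 i + Finsupp.single 1 j) F₁ = 0) ∧
      φ ((MvPowerSeries.X 0 ^ a * MvPowerSeries.X 1 ^ b) ^ m) =
        (MvPowerSeries.X 0 ^ (a + b) * MvPowerSeries.X 1 ^ b) ^ m ∧
      φ (pevm a b P + MvPowerSeries.X 0 ^ c * MvPowerSeries.X 1 ^ d * F) =
        pevm (a + b) b P +
          MvPowerSeries.X 0 ^ (c + d + r) * MvPowerSeries.X 1 ^ d * F₁ :=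
  quadSubst_of_normalized_two_point_form_general k a b m c d hb F hnorm r hr P φ hφc hφ0 hφ1

end
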